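/- Let C_{ab}^d, ρ₁_a^i, ρ₂_a^i : ℝⁿ → ℝ be smooth functions. On ℝⁿ × ℝᵐ with coordinates (x^i, ξ_a) define, for smooth F, G : ℝⁿ × ℝᵐ → ℝ, the bracket [F,G]_Λ = Σ_{a,b,d} C_{ab}^d(x) ξ_d (∂F/∂ξ_a)(∂G/∂ξ_b) + Σ_{a,i} ρ₁_a^i(x) (∂F/∂ξ_a)(∂G/∂x^i) − Σ_{a,i} ρ₂_a^i(x) (∂F/∂x^i)(∂G/∂ξ_a). For a smooth section σ : ℝⁿ → ℝᵐ let i_σ(x,ξ) = Σ_a ξ_a σ^a(x), and define [σ₁,σ₂]^d = Σ_{a,b} C_{ab}^d σ₁^a σ₂^b + Σ_{a,i} ρ₁_a^i σ₁^a ∂σ₂^d/∂x^i − Σ_{a,i} ρ₂_a^i σ₂^a ∂σ₁^d/∂x^i. Then for all smooth sections σ₁, σ₂ : ℝⁿ → ℝᵐ one has i_{[σ₁,σ₂]} = [i_{σ₁}, i_{σ₂}]_Λ as functions on ℝⁿ × ℝᵐ. -/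

import Mathlib

/-! Since `i_σ` is linear in the fibre coordinates, `∂i_σ/∂ξ_a = σ^a` and
`∂i_σ/∂x^i = Σ_b ξ_b ∂σ^b/∂x^i`. Substituting these into `Λ` and moving `ξ_d` to the outside
of each triple sum gives `Σ_d ξ_d [σ₁,σ₂]^d` term by term. -/

/-- Partial derivative `∂F/∂x^i` of `F : ℝⁿ × ℝᵐ → ℝ` at `p = (x,ξ)`. -/
noncomputable def pdx {n m : ℕ} (F : (Fin n → ℝ) × (Fin m → ℝ) → ℝ) (i : Fin n)
    (p : (Fin n → ℝ) × (Fin m → ℝ)) : ℝ :=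
  fderiv ℝ F p (Pi.single i 1, 0)

/-- Partial derivative `∂F/∂ξ_a` of `F : ℝⁿ × ℝᵐ → ℝ` at `p = (x,ξ)`. -/
noncomputable def pdξ {n m : ℕ} (F : (Fin n → ℝ) × (Fin m → ℝ) → ℝ) (a : Fin m)
    (p : (Fin n → ℝ) × (Fin m → ℝ)) : ℝ :=
  fderiv ℝ F p (0, Pi.single a 1)

/-- The `i`-th partial derivative of a function `f : ℝⁿ → ℝ` at `x`. -/
noncomputable def pd {n : ℕ} (f : (Fin n → ℝ) → ℝ) (i : Fin n) (x : Fin n → ℝ) : ℝ :=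
  fderiv ℝ f x (Pi.single i 1)

/-- The bracket on `C^∞(ℝⁿ × ℝᵐ)` associated to the linear 2-contravariant tensor field `Λ`
with structure functions `C x a b d = C_{ab}^d(x)` and anchors `ρ₁ x a i = ρ₁_a^i(x)`,
`ρ₂ x a i = ρ₂_a^i(x)`:
`[F,G]_Λ = Σ C_{ab}^d ξ_d ∂F/∂ξ_a ∂G/∂ξ_b + Σ ρ₁_a^i ∂F/∂ξ_a ∂G/∂x^i
           − Σ ρ₂_a^i ∂F/∂x^i ∂G/∂ξ_a`. -/
noncomputable def ΛBracket {n m : ℕ}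
    (C : (Fin n → ℝ) → Fin m → Fin m → Fin m → ℝ)
    (ρ₁ ρ₂ : (Fin n → ℝ) → Fin m → Fin n → ℝ)
    (F G : (Fin n → ℝ) × (Fin m → ℝ) → ℝ) (p : (Fin n → ℝ) × (Fin m → ℝ)) : ℝ :=
  (∑ a, ∑ b, ∑ d, C p.1 a b d * p.2 d * pdξ F a p * pdξ G b p)
    + (∑ a, ∑ i, ρ₁ p.1 a i * pdξ F a p * pdx G i p)
    - (∑ a, ∑ i, ρ₂ p.1 a i * pdx F i p * pdξ G a p)

/-- The fiberwise-linear function `i_σ(x,ξ) = Σ_a ξ_a σ^a(x)` induced by a section `σ`. -/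
noncomputable def iSec {n m : ℕ} (σ : (Fin n → ℝ) → Fin m → ℝ)
    (p : (Fin n → ℝ) × (Fin m → ℝ)) : ℝ :=
  ∑ a, p.2 a * σ p.1 a

/-- The Leibniz algebroid bracket of sections `σ₁, σ₂ : ℝⁿ → ℝᵐ`. -/
noncomputable def secBracket {n m : ℕ}
    (C : (Fin n → ℝ) → Fin m → Fin m → Fin m → ℝ)
    (ρ₁ ρ₂ : (Fin n → ℝ) → Fin m → Fin n → ℝ)
    (σ₁ σ₂ : (Fin n → ℝ) → Fin m → ℝ) (x : Fin n → ℝ) (d : Fin m) : ℝ :=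
  (∑ a, ∑ b, C x a b d * σ₁ x a * σ₂ x b)
    + (∑ a, ∑ i, ρ₁ x a i * σ₁ x a * pd (fun y => σ₂ y d) i x)
    - (∑ a, ∑ i, ρ₂ x a i * σ₂ x a * pd (fun y => σ₁ y d) i x)

lemma sum_rotate_of_eq {ι κ μ M : Type*} [Fintype ι] [Fintype κ] [Fintype μ]
    [AddCommMonoid M] {f g : ι → κ → μ → M} (h : ∀ a b c, f a b c = g a b c) :
    ∑ c, ∑ a, ∑ b, f a b c = ∑ a, ∑ b, ∑ c, g a b c := by
  rw [Finset.sum_comm]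
  exact Finset.sum_congr rfl fun a _ => by rw [Finset.sum_comm]; simp only [h]

section

variable {n m : ℕ}

lemma hasFDerivAt_iSec (σ : (Fin n → ℝ) → Fin m → ℝ) (p : (Fin n → ℝ) × (Fin m → ℝ))
    (hσ : ∀ a, DifferentiableAt ℝ (fun x => σ x a) p.1) :
    HasFDerivAt (iSec σ)
      (∑ a, (p.2 a • (fderiv ℝ (fun x => σ x a) p.1).comp (.fst ℝ _ _)
        + σ p.1 a • (ContinuousLinearMap.proj a : (Fin m → ℝ) →L[ℝ] ℝ).comp (.snd ℝ _ _))) p :=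
  .fun_sum fun a _ =>
    ((ContinuousLinearMap.proj a : (Fin m → ℝ) →L[ℝ] ℝ).comp (.snd ℝ _ _)).hasFDerivAt.mul
      ((hσ a).hasFDerivAt.comp p hasFDerivAt_fst)

lemma pdξ_iSec (σ : (Fin n → ℝ) → Fin m → ℝ) (p : (Fin n → ℝ) × (Fin m → ℝ))
    (hσ : ∀ a, DifferentiableAt ℝ (fun x => σ x a) p.1) (a : Fin m) :
    pdξ (iSec σ) a p = σ p.1 a := by
  simp [pdξ, (hasFDerivAt_iSec σ p hσ).fderiv, Pi.single_apply]

lemma pdx_iSec (σ : (Fin n → ℝ) → Fin m → ℝ) (p : (Fin n → ℝ) × (Fin m → ℝ))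
    (hσ : ∀ a, DifferentiableAt ℝ (fun x => σ x a) p.1) (i : Fin n) :
    pdx (iSec σ) i p = ∑ b, p.2 b * pd (fun x => σ x b) i p.1 := by
  simp [pdx, (hasFDerivAt_iSec σ p hσ).fderiv, pd]

end

theorem stmt_7_general {n m : ℕ}
    (C : (Fin n → ℝ) → Fin m → Fin m → Fin m → ℝ)
    (ρ₁ ρ₂ : (Fin n → ℝ) → Fin m → Fin n → ℝ)
    (σ₁ σ₂ : (Fin n → ℝ) → Fin m → ℝ)
    (hσ₁ : ∀ a, ContDiff ℝ (⊤ : ℕ∞) fun x => σ₁ x a)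
    (hσ₂ : ∀ a, ContDiff ℝ (⊤ : ℕ∞) fun x => σ₂ x a) :
    ∀ p : (Fin n → ℝ) × (Fin m → ℝ),
      (∑ d, p.2 d * secBracket C ρ₁ ρ₂ σ₁ σ₂ p.1 d)
        = ΛBracket C ρ₁ ρ₂ (iSec σ₁) (iSec σ₂) p := by
  intro p
  have h₁ a : DifferentiableAt ℝ (fun x => σ₁ x a) p.1 := (hσ₁ a).differentiable (by simp) _
  have h₂ a : DifferentiableAt ℝ (fun x => σ₂ x a) p.1 := (hσ₂ a).differentiable (by simp) _
  simp only [ΛBracket, pdξ_iSec σ₁ p h₁, pdξ_iSec σ₂ p h₂, pdx_iSec σ₁ p h₁, pdx_iSec σ₂ p h₂,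
    secBracket, mul_add, mul_sub, Finset.sum_add_distrib, Finset.sum_sub_distrib,
    Finset.mul_sum, Finset.sum_mul]
  congr 1; congr 1
  all_goals exact sum_rotate_of_eq fun _ _ _ => by ring

/-- `i_{[σ₁,σ₂]} = [i_{σ₁}, i_{σ₂}]_Λ` as functions on `ℝⁿ × ℝᵐ`. -/
theorem stmt_7 {n m : ℕ}
    (C : (Fin n → ℝ) → Fin m → Fin m → Fin m → ℝ)
    (ρ₁ ρ₂ : (Fin n → ℝ) → Fin m → Fin n → ℝ)
    (hC : ∀ a b d, ContDiff ℝ (⊤ : ℕ∞) fun x => C x a b d)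
    (hρ₁ : ∀ a i, ContDiff ℝ (⊤ : ℕ∞) fun x => ρ₁ x a i)
    (hρ₂ : ∀ a i, ContDiff ℝ (⊤ : ℕ∞) fun x => ρ₂ x a i)
    (σ₁ σ₂ : (Fin n → ℝ) → Fin m → ℝ)
    (hσ₁ : ∀ a, ContDiff ℝ (⊤ : ℕ∞) fun x => σ₁ x a)
    (hσ₂ : ∀ a, ContDiff ℝ (⊤ : ℕ∞) fun x => σ₂ x a) :
    ∀ p : (Fin n → ℝ) × (Fin m → ℝ),
      (∑ d, p.2 d * secBracket C ρ₁ ρ₂ σ₁ σ₂ p.1 d)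
        = ΛBracket C ρ₁ ρ₂ (iSec σ₁) (iSec σ₂) p :=
  stmt_7_general C ρ₁ ρ₂ σ₁ σ₂ hσ₁ hσ₂
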